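/- Let t be a PCF program (a closed term of PCF type Nat) and let C = (t,ε,ε). Then for every configuration D = (u,ρ,ξ) with C →* D and every term v occurring in the environment ρ or in the stack ξ, |v| ≤ |t|. -/

import Mathlib

/-!
Every transition of K_PCF either replaces the current term by one of its immediate subterms,
by a numeral (of size 1, like the numeral it replaces), or by a term already stored in the
environment or the stack; and the closures and branches it stores are built from immediate
subterms of the current term and from what is already stored. So "every term occurring in the
configuration has size at most `N`" is an invariant of the machine, and `(t, ε, ε)` satisfies
it for `N = |t|`.
-/

set_option maxHeartbeats 1000000

namespace DlPCF

/-- An equational program over a signature: a finite-support interpretation of the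
function symbols as partial functions over ℕ, where the distinguished symbols
`0`, `1`, `+`, `∸` are interpreted in the standard way. -/
structure EqProgram (F : Type) where
  interp : F → List ℕ → Option ℕ
  zeroS : F
  oneS : F
  addS : F
  subS : F
  interp_zero : interp zeroS [] = some 0
  interp_one : interp oneS [] = some 1
  interp_add : ∀ m n : ℕ, interp addS [m, n] = some (m + n)
  interp_sub : ∀ m n : ℕ, interp subS [m, n] = some (m - n)

/-- Index terms: variables, applications of function symbols, bounded sums
`Σ_{a<I} J` and forest cardinalities `⊲ᵃ(I,J,K)`. -/
inductive IndexTerm (F : Type) : Type where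
  | var : ℕ → IndexTerm F
  | app : F → List (IndexTerm F) → IndexTerm F
  | bsum : ℕ → IndexTerm F → IndexTerm F → IndexTerm F
  | fcard : ℕ → IndexTerm F → IndexTerm F → IndexTerm F → IndexTerm F

namespace IndexTerm

variable {F : Type}

/-- Substitution of an index term for an index variable (not entering binders
that rebind the variable). -/
def subst (a : ℕ) (u : IndexTerm F) : IndexTerm F → IndexTerm F
  | var b => if b = a then u else var b
  | app f args => app f (args.attach.map fun x => subst a u x.1)
  | bsum b I J => bsum b (subst a u I) (if b = a then J else subst a u J)
  | fcard b I J K => fcard b (subst a u I) (subst a u J) (if b = a then K else subst a u K)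
  termination_by t => sizeOf t
  decreasing_by all_goals simp_wf <;> first
    | omega
    | (have := List.sizeOf_lt_of_mem x.2; omega)

/-- Free index variables. -/
def fv : IndexTerm F → Finset ℕ
  | var b => {b}
  | app _ args => (args.attach.map fun x => fv x.1).foldr (· ∪ ·) ∅
  | bsum b I J => fv I ∪ (fv J).erase b
  | fcard b I J K => fv I ∪ fv J ∪ (fv K).erase b
  termination_by t => sizeOf t
  decreasing_by all_goals simp_wf <;> first
    | omega
    | (have := List.sizeOf_lt_of_mem x.2; omega)

/-- Bound index variables. -/
def bv : IndexTerm F → Finset ℕ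
  | var _ => ∅
  | app _ args => (args.attach.map fun x => bv x.1).foldr (· ∪ ·) ∅
  | bsum b I J => insert b (bv I ∪ bv J)
  | fcard b I J K => insert b (bv I ∪ bv J ∪ bv K)
  termination_by t => sizeOf t
  decreasing_by all_goals simp_wf <;> first
    | omega
    | (have := List.sizeOf_lt_of_mem x.2; omega)

end IndexTerm

variable {F : Type}

/-- The index term `0`. -/
def EqProgram.zero (E : EqProgram F) : IndexTerm F := .app E.zeroS []

/-- The index term `1`. -/
def EqProgram.one (E : EqProgram F) : IndexTerm F := .app E.oneS []

/-- Sum of index terms. -/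
def EqProgram.add (E : EqProgram F) (I J : IndexTerm F) : IndexTerm F := .app E.addS [I, J]

/-- Truncated difference of index terms. -/
def EqProgram.sub (E : EqProgram F) (I J : IndexTerm F) : IndexTerm F := .app E.subS [I, J]

/-- Numeral index terms. -/
def EqProgram.lit (E : EqProgram F) : ℕ → IndexTerm F
  | 0 => E.zero
  | n + 1 => E.add (E.lit n) E.one

mutual
  /-- Partial semantics of index terms: `Sem E ρ I n` means `⟦I⟧_ρ^E = n`
  (definedness is expressed as existence of a value). It is the least relation
  closed under the defining equations; in particular forest cardinalities are
  interpreted by the least solution of their defining equations. -/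
  inductive Sem {F : Type} (E : EqProgram F) : (ℕ → ℕ) → IndexTerm F → ℕ → Prop where
    | var : ∀ ρ a, Sem E ρ (.var a) (ρ a)
    | app : ∀ ρ f args vals n, SemList E ρ args vals → E.interp f vals = some n →
        Sem E ρ (.app f args) n
    | bsum : ∀ (ρ : ℕ → ℕ) a I J k (vs : ℕ → ℕ), Sem E ρ I k →
        (∀ i, i < k → Sem E (Function.update ρ a i) J (vs i)) →
        Sem E ρ (.bsum a I J) (∑ i ∈ Finset.range k, vs i)
    | fcardZero : ∀ ρ a I J K, Sem E ρ J 0 → Sem E ρ (.fcard a I J K) 0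
    | fcardSucc : ∀ ρ a I J K i j n, Sem E ρ I i → Sem E ρ J j →
        FSem E ρ a i j K n → Sem E ρ (.fcard a I J K) n

  /-- Pointwise semantics on lists of index terms. -/
  inductive SemList {F : Type} (E : EqProgram F) :
      (ℕ → ℕ) → List (IndexTerm F) → List ℕ → Prop where
    | nil : ∀ ρ, SemList E ρ [] []
    | cons : ∀ ρ I Is n ns, Sem E ρ I n → SemList E ρ Is ns →
        SemList E ρ (I :: Is) (n :: ns)

  /-- `FSem E ρ a i j K n`: the forest of `j` trees whose nodes are indexed in
  pre-order starting from `i`, the number of children of node `m` being the value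
  of `K` with `a := m`, has exactly `n` nodes. -/
  inductive FSem {F : Type} (E : EqProgram F) :
      (ℕ → ℕ) → ℕ → ℕ → ℕ → IndexTerm F → ℕ → Prop where
    | zero : ∀ ρ a i K, FSem E ρ a i 0 K 0
    | succ : ∀ (ρ : ℕ → ℕ) a i j K m c p,
        FSem E ρ a i j K m →
        Sem E (Function.update ρ a (i + m)) K c →
        FSem E ρ a (i + 1 + m) c K p →
        FSem E ρ a i (j + 1) K (m + 1 + p)
end

/-- A constraint `I ≤ J` between index terms. -/
def Constr (F : Type) : Type := IndexTerm F × IndexTerm F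

/-- Substitution on constraints. -/
def Constr.substC (c : Constr F) (a : ℕ) (u : IndexTerm F) : Constr F :=
  (c.1.subst a u, c.2.subst a u)

/-- Truth of a constraint under an assignment (both sides defined and `≤`). -/
def constrHolds (E : EqProgram F) (ρ : ℕ → ℕ) (c : Constr F) : Prop :=
  ∃ m n, Sem E ρ c.1 m ∧ Sem E ρ c.2 n ∧ m ≤ n

/-- Truth of a set of constraints. -/
def holdsAll (E : EqProgram F) (ρ : ℕ → ℕ) (Φ : List (Constr F)) : Prop :=
  ∀ c ∈ Φ, constrHolds E ρ c

/-- `Φ ⊨^E I ≤ J`. -/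
def entailsLe (E : EqProgram F) (Φ : List (Constr F)) (I J : IndexTerm F) : Prop :=
  ∀ ρ, holdsAll E ρ Φ → ∃ m n, Sem E ρ I m ∧ Sem E ρ J n ∧ m ≤ n

/-- `Φ ⊨^E I = J`. -/
def entailsEq (E : EqProgram F) (Φ : List (Constr F)) (I J : IndexTerm F) : Prop :=
  ∀ ρ, holdsAll E ρ Φ → ∃ n, Sem E ρ I n ∧ Sem E ρ J n

/-- `Φ ⊨^E I < J`. -/
def entailsLt (E : EqProgram F) (Φ : List (Constr F)) (I J : IndexTerm F) : Prop :=
  ∀ ρ, holdsAll E ρ Φ → ∃ m n, Sem E ρ I m ∧ Sem E ρ J n ∧ m < n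

/-- `Φ ⊨^E I ≃ J` (Kleene equality under all assignments satisfying `Φ`). -/
def entailsKleene (E : EqProgram F) (Φ : List (Constr F)) (I J : IndexTerm F) : Prop :=
  ∀ ρ, holdsAll E ρ Φ → ∀ n, Sem E ρ I n ↔ Sem E ρ J n

/-- Comparison used in the premises of typing rules: in precise derivations
(`pr = true`) all the `≤` premises must hold with equality. -/
def cmpLe (E : EqProgram F) (pr : Bool) (Φ : List (Constr F)) (I J : IndexTerm F) : Prop :=
  if pr then entailsEq E Φ I J else entailsLe E Φ I J

/-- The constraint `a < I`. -/
def cLT (E : EqProgram F) (a : ℕ) (I : IndexTerm F) : Constr F := (E.add (.var a) E.one, I)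

/-- The constraint `I ≤ 0`. -/
def cLE0 (E : EqProgram F) (I : IndexTerm F) : Constr F := (I, E.zero)

/-- The constraint `I ≥ 1`. -/
def cGE1 (E : EqProgram F) (I : IndexTerm F) : Constr F := (E.one, I)

/-! ### PCF -/

/-- PCF terms, with de Bruijn indices for term variables. -/
inductive Term : Type where
  | var : ℕ → Term
  | lit : ℕ → Term
  | succ : Term → Term
  | pred : Term → Term
  | lam : Term → Term
  | app : Term → Term → Term
  | ifz : Term → Term → Term → Term
  | fix : Term → Term

namespace Term

/-- Shifting of de Bruijn indices (variables `≥ c` are incremented). -/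
def shift (c : ℕ) : Term → Term
  | var n => if n < c then var n else var (n + 1)
  | lit n => lit n
  | succ t => succ (shift c t)
  | pred t => pred (shift c t)
  | lam t => lam (shift (c + 1) t)
  | app t u => app (shift c t) (shift c u)
  | ifz t u v => ifz (shift c t) (shift c u) (shift c v)
  | fix t => fix (shift (c + 1) t)

/-- Capture-avoiding substitution `t[x_k := u]`. -/
def subst (k : ℕ) (u : Term) : Term → Term
  | var n => if n < k then var n else if n = k then u else var (n - 1)
  | lit n => lit n
  | succ t => succ (subst k u t)
  | pred t => pred (subst k u t)
  | lam t => lam (subst (k + 1) (shift 0 u) t)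
  | app t v => app (subst k u t) (subst k u v)
  | ifz t v w => ifz (subst k u t) (subst k u v) (subst k u w)
  | fix t => fix (subst (k + 1) (shift 0 u) t)

/-- Size of a term. -/
def size : Term → ℕ
  | var _ => 1
  | lit _ => 1
  | succ t => t.size + 2
  | pred t => t.size + 2
  | lam t => t.size + 1
  | app t u => t.size + u.size + 1
  | ifz t u v => t.size + u.size + v.size + 1
  | fix t => t.size + 1

end Term

/-- Weak-head reduction of PCF terms. -/
inductive Whr : Term → Term → Prop where
  | beta : ∀ t u, Whr (.app (.lam t) u) (t.subst 0 u)
  | succLit : ∀ n, Whr (.succ (.lit n)) (.lit (n + 1))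
  | predSucc : ∀ n, Whr (.pred (.lit (n + 1))) (.lit n)
  | predZero : Whr (.pred (.lit 0)) (.lit 0)
  | ifzZero : ∀ u v, Whr (.ifz (.lit 0) u v) u
  | ifzSucc : ∀ n u v, Whr (.ifz (.lit (n + 1)) u v) v
  | fix : ∀ t, Whr (.fix t) (t.subst 0 (.fix t))
  | succCtx : ∀ t u, Whr t u → Whr (.succ t) (.succ u)
  | predCtx : ∀ t u, Whr t u → Whr (.pred t) (.pred u)
  | appCtx : ∀ t v u, Whr t v → Whr (.app t u) (.app v u)
  | ifzCtx : ∀ t w u v, Whr t w → Whr (.ifz t u v) (.ifz w u v)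

/-- Simple PCF types. -/
inductive PTy : Type where
  | nat : PTy
  | arr : PTy → PTy → PTy

/-- The standard PCF type system. -/
inductive PTyping : List PTy → Term → PTy → Prop where
  | var : ∀ Γ n σ, Γ[n]? = some σ → PTyping Γ (.var n) σ
  | lit : ∀ Γ n, PTyping Γ (.lit n) .nat
  | succ : ∀ Γ t, PTyping Γ t .nat → PTyping Γ (.succ t) .nat
  | pred : ∀ Γ t, PTyping Γ t .nat → PTyping Γ (.pred t) .nat
  | lam : ∀ Γ σ τ t, PTyping (σ :: Γ) t τ → PTyping Γ (.lam t) (.arr σ τ)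
  | app : ∀ Γ σ τ t u, PTyping Γ t (.arr σ τ) → PTyping Γ u σ → PTyping Γ (.app t u) τ
  | ifz : ∀ Γ σ t u v, PTyping Γ t .nat → PTyping Γ u σ → PTyping Γ v σ →
      PTyping Γ (.ifz t u v) σ
  | fix : ∀ Γ σ t, PTyping (σ :: Γ) t σ → PTyping Γ (.fix t) σ

/-! ### dℓPCF types -/

mutual
  /-- Basic dℓPCF types: `Nat[I,J]` and `A ⊸ σ`. -/
  inductive BType (F : Type) : Type where
    | nat : IndexTerm F → IndexTerm F → BType F
    | arr : MType F → BType F → BType F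

  /-- Modal dℓPCF types: `[a<I]σ`. -/
  inductive MType (F : Type) : Type where
    | box : ℕ → IndexTerm F → BType F → MType F
end

mutual
  /-- Substitution of an index term for an index variable in a basic type. -/
  def BType.isubst (a : ℕ) (u : IndexTerm F) : BType F → BType F
    | .nat I J => .nat (I.subst a u) (J.subst a u)
    | .arr A σ => .arr (A.isubst a u) (σ.isubst a u)

  /-- Substitution of an index term for an index variable in a modal type. -/
  def MType.isubst (a : ℕ) (u : IndexTerm F) : MType F → MType F
    | .box b I σ => .box b (I.subst a u) (if b = a then σ else σ.isubst a u)
end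

mutual
  /-- Erasure `⌊σ⌋` of a basic type to a PCF type. -/
  def BType.erase : BType F → PTy
    | .nat _ _ => .nat
    | .arr A σ => .arr A.erase σ.erase

  /-- Erasure of a modal type to a PCF type. -/
  def MType.erase : MType F → PTy
    | .box _ _ σ => σ.erase
end

mutual
  /-- Subtyping of basic types.  When `pr = true` this is the "precise" version,
  where all semantic premises `I ≤ J` are required to hold as equalities (and hence
  the relation is the type equivalence `≅`). -/
  inductive Sub {F : Type} (E : EqProgram F) (pr : Bool) :
      List ℕ → List (Constr F) → BType F → BType F → Prop where
    | nat : ∀ φ Φ I J K H, cmpLe E pr Φ K I → cmpLe E pr Φ J H →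
        Sub E pr φ Φ (.nat I J) (.nat K H)
    | arr : ∀ φ Φ A B σ τ, SubM E pr φ Φ B A → Sub E pr φ Φ σ τ →
        Sub E pr φ Φ (.arr A σ) (.arr B τ)

  /-- Subtyping of modal types. -/
  inductive SubM {F : Type} (E : EqProgram F) (pr : Bool) :
      List ℕ → List (Constr F) → MType F → MType F → Prop where
    | box : ∀ φ Φ a I J σ τ,
        Sub E pr (a :: φ) (cLT E a I :: Φ) σ τ →
        cmpLe E pr Φ J I →
        SubM E pr φ Φ (.box a I σ) (.box a J τ)
end

/-- Well-definedness `φ;Φ ⊢ σ↓` of a basic type (sugar for `σ ⊑ σ`). -/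
def BType.wd (E : EqProgram F) (pr : Bool) (φ : List ℕ) (Φ : List (Constr F))
    (σ : BType F) : Prop := Sub E pr φ Φ σ σ

/-- Well-definedness of a modal type. -/
def MType.wd (E : EqProgram F) (pr : Bool) (φ : List ℕ) (Φ : List (Constr F))
    (A : MType F) : Prop := SubM E pr φ Φ A A

/-- Well-definedness of a typing context. -/
def CtxWD (E : EqProgram F) (pr : Bool) (φ : List ℕ) (Φ : List (Constr F))
    (Γ : List (MType F)) : Prop := ∀ A ∈ Γ, SubM E pr φ Φ A A

/-- Sum `A ⊎ B` of modal types: `A` consists of the first `I` instances of a type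
`μ`, `B` of the next `J` instances, and the sum of the first `I+J` instances. -/
inductive MSum (E : EqProgram F) : MType F → MType F → MType F → Prop where
  | mk : ∀ a b c I J μ,
      MSum E (.box a I (BType.isubst c (.var a) μ))
             (.box b J (BType.isubst c (E.add I (.var b)) μ))
             (.box c (E.add I J) μ)

/-- Bounded sum `Σ_{a<I} A` of a modal type. -/
inductive MBSum (E : EqProgram F) (a : ℕ) (I : IndexTerm F) : MType F → MType F → Prop where
  | mk : ∀ b c d J σ,
      MBSum E a I
        (.box b J (BType.isubst c
          (E.add (.bsum d (.var a) (J.subst a (.var d))) (.var b)) σ))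
        (.box c (.bsum a I J) σ)

/-- Pointwise sum of typing contexts. -/
inductive CtxSum (E : EqProgram F) : List (MType F) → List (MType F) → List (MType F) → Prop where
  | nil : CtxSum E [] [] []
  | cons : ∀ A B C Γ Δ Θ, MSum E A B C → CtxSum E Γ Δ Θ →
      CtxSum E (A :: Γ) (B :: Δ) (C :: Θ)

/-- Pointwise bounded sum of typing contexts. -/
def CtxBSum (E : EqProgram F) (a : ℕ) (I : IndexTerm F)
    (Γ Δ : List (MType F)) : Prop := List.Forall₂ (MBSum E a I) Γ Δ

/-- Pointwise subtyping of typing contexts. -/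
def CtxSub (E : EqProgram F) (pr : Bool) (φ : List ℕ) (Φ : List (Constr F))
    (Γ Δ : List (MType F)) : Prop := List.Forall₂ (SubM E pr φ Φ) Γ Δ

/-- The dℓPCF type system (Figure 5 of the paper).  The flag `pr` selects
precise derivations, in which all semantic premises `I ≤ J` must be equalities
and all subtyping premises must be equivalences. -/
inductive Typing {F : Type} (E : EqProgram F) (pr : Bool) :
    List ℕ → List (Constr F) → List (MType F) → IndexTerm F → Term → BType F → Prop where
  | var : ∀ φ Φ Γ n a I σ J τ,
      Γ[n]? = some (.box a I σ) →
      cmpLe E pr Φ E.zero J →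
      cmpLe E pr Φ E.one I →
      Sub E pr φ Φ (σ.isubst a E.zero) τ →
      CtxWD E pr φ Φ Γ →
      Typing E pr φ Φ Γ J (.var n) τ
  | lam : ∀ φ Φ Γ A J t τ,
      Typing E pr φ Φ (A :: Γ) J t τ →
      Typing E pr φ Φ Γ J (.lam t) (.arr A τ)
  | app : ∀ φ Φ Γ Δ Δs Θ Sc a I σ τ J K H t u,
      a ∉ φ →
      Typing E pr φ Φ Γ J t (.arr (.box a I σ) τ) →
      Typing E pr (a :: φ) (cLT E a I :: Φ) Δ K u σ →
      CtxBSum E a I Δ Δs →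
      CtxSum E Γ Δs Θ →
      CtxSub E pr φ Φ Sc Θ →
      cmpLe E pr Φ (E.add J (E.add I (.bsum a I K))) H →
      Typing E pr φ Φ Sc H (.app t u) τ
  | lit : ∀ φ Φ Γ K I J n,
      cmpLe E pr Φ E.zero K →
      cmpLe E pr Φ I (E.lit n) →
      cmpLe E pr Φ (E.lit n) J →
      CtxWD E pr φ Φ Γ →
      Typing E pr φ Φ Γ K (.lit n) (.nat I J)
  | succ : ∀ φ Φ Γ I J K H L t,
      Sub E pr φ Φ (.nat (E.add I E.one) (E.add J E.one)) (.nat K H) →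
      Typing E pr φ Φ Γ L t (.nat I J) →
      Typing E pr φ Φ Γ L (.succ t) (.nat K H)
  | pred : ∀ φ Φ Γ I J K H L t,
      Sub E pr φ Φ (.nat (E.sub I E.one) (E.sub J E.one)) (.nat K H) →
      Typing E pr φ Φ Γ L t (.nat I J) →
      Typing E pr φ Φ Γ L (.pred t) (.nat K H)
  | ifz : ∀ φ Φ Γ Δ Θ Sc I J K H L t u v σ,
      Typing E pr φ Φ Γ K t (.nat I J) →
      Typing E pr φ (cLE0 E I :: Φ) Δ H u σ →
      Typing E pr φ (cGE1 E J :: Φ) Δ H v σ →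
      CtxSum E Γ Δ Θ →
      CtxSub E pr φ Φ Sc Θ →
      cmpLe E pr Φ (E.add K H) L →
      Typing E pr φ Φ Sc L (.ifz t u v) σ
  | fix : ∀ φ Φ Γ Γs Sc a b I K L M N σ τ μ t,
      a ∉ φ → b ∉ φ → a ≠ b →
      Typing E pr (b :: φ) (cLT E b L :: Φ) (MType.box a I σ :: Γ) K t τ →
      Sub E pr φ Φ (τ.isubst b E.zero) μ →
      Sub E pr (a :: b :: φ) (cLT E a I :: cLT E b L :: Φ)
        (τ.isubst b (E.add (.fcard b (E.add (.var b) E.one) (.var a) I)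
          (E.add (.var b) E.one))) σ →
      CtxBSum E b L Γ Γs →
      CtxSub E pr φ Φ Sc Γs →
      cmpLe E pr Φ (.fcard b E.zero E.one I) L →
      cmpLe E pr Φ (.fcard b E.zero E.one I) M →
      cmpLe E pr Φ (E.add (E.sub M E.one) (.bsum b L K)) N →
      Typing E pr φ Φ Sc N (.fix t) μ

/-! ### The Krivine machine K_PCF -/

/-- Closures. -/
inductive Closure : Type where
  | mk : Term → List Closure → Closure

/-- Environments. -/
abbrev Env : Type := List Closure

/-- Stack elements. -/
inductive StackEl : Type where
  | cl : Closure → StackEl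
  | s : StackEl
  | p : StackEl
  | br : Term → Term → Env → StackEl

/-- Stacks. -/
abbrev Stack : Type := List StackEl

/-- Machine configurations. -/
abbrev Conf : Type := Term × Env × Stack

/-- The transition relation of the machine K_PCF. -/
inductive Step : Conf → Conf → Prop where
  | app : ∀ t u ρ ξ, Step (.app t u, ρ, ξ) (t, ρ, .cl (.mk u ρ) :: ξ)
  | lam : ∀ t ρ c ξ, Step (.lam t, ρ, .cl c :: ξ) (t, c :: ρ, ξ)
  | var : ∀ n (ρ : Env) t' ρ' ξ, ρ[n]? = some (.mk t' ρ') →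
      Step (.var n, ρ, ξ) (t', ρ', ξ)
  | ifz : ∀ t u v ρ ξ, Step (.ifz t u v, ρ, ξ) (t, ρ, .br u v ρ :: ξ)
  | fix : ∀ t ρ ξ, Step (.fix t, ρ, ξ) (t, .mk (.fix t) ρ :: ρ, ξ)
  | succLit : ∀ n ρ ξ, Step (.lit n, ρ, .s :: ξ) (.lit (n + 1), ρ, ξ)
  | predLit : ∀ n ρ ξ, Step (.lit n, ρ, .p :: ξ) (.lit (n - 1), ρ, ξ)
  | brZero : ∀ u v ρ μ ξ, Step (.lit 0, ρ, .br u v μ :: ξ) (u, μ, ξ)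
  | brSucc : ∀ n u v ρ μ ξ, Step (.lit (n + 1), ρ, .br u v μ :: ξ) (v, μ, ξ)
  | succPush : ∀ t ρ ξ, Step (.succ t, ρ, ξ) (t, ρ, .s :: ξ)
  | predPush : ∀ t ρ ξ, Step (.pred t, ρ, ξ) (t, ρ, .p :: ξ)

/-- `Steps n C D`: the machine goes from `C` to `D` in exactly `n` steps. -/
inductive Steps : ℕ → Conf → Conf → Prop where
  | refl : ∀ C, Steps 0 C C
  | step : ∀ n C D D', Step C D → Steps n D D' → Steps (n + 1) C D'

/-- `t ⇓ⁿ m`: evaluation of the program `t` to the numeral `m` in `n` steps. -/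
def Eval (t : Term) (n m : ℕ) : Prop := ∃ ρ, Steps n (t, [], []) (.lit m, ρ, [])

/-- Size of a stack element. -/
def StackEl.size : StackEl → ℕ
  | .cl (.mk t _) => t.size
  | .s => 1
  | .p => 1
  | .br t u _ => t.size + u.size

/-- Size of a stack. -/
def stackSize (ξ : Stack) : ℕ := (ξ.map StackEl.size).sum

/-- Size of a configuration. -/
def confSize (C : Conf) : ℕ := C.1.size + stackSize C.2.2

/-- A term occurs in a closure. -/
inductive InClos : Term → Closure → Prop where
  | head : ∀ t ρ, InClos t (.mk t ρ)
  | env : ∀ v t ρ c, c ∈ ρ → InClos v c → InClos v (.mk t ρ)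

/-- A term occurs in an environment. -/
def InEnv (v : Term) (ρ : Env) : Prop := ∃ c ∈ ρ, InClos v c

/-- A term occurs in a stack element. -/
def InStackEl (v : Term) : StackEl → Prop
  | .cl c => InClos v c
  | .s => False
  | .p => False
  | .br t u ρ => v = t ∨ v = u ∨ InEnv v ρ

/-- A term occurs in a stack. -/
def InStack (v : Term) (ξ : Stack) : Prop := ∃ e ∈ ξ, InStackEl v e

/-- Sum of a list of index terms. -/
def sumIdx (E : EqProgram F) : List (IndexTerm F) → IndexTerm F
  | [] => E.zero
  | I :: Is => E.add I (sumIdx E Is)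

mutual
  /-- Lifting of dℓPCF typing to closures (Figure 6). -/
  inductive CTyping {F : Type} (E : EqProgram F) (pr : Bool) :
      List ℕ → List (Constr F) → Closure → BType F → IndexTerm F → Prop where
    | mk : ∀ φ Φ t ρ σ a Is τs Hs K J,
        a ∉ φ →
        Typing E pr φ Φ (List.zipWith (fun I τ => MType.box a I τ) Is τs) K t σ →
        CTypings E pr φ Φ a ρ Is τs Hs →
        cmpLe E pr Φ (E.add K (E.add (sumIdx E Is)
          (sumIdx E (List.zipWith (fun I H => IndexTerm.bsum a I H) Is Hs)))) J →
        CTyping E pr φ Φ (.mk t ρ) σ J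

  /-- Pointwise typing of the closures of an environment. -/
  inductive CTypings {F : Type} (E : EqProgram F) (pr : Bool) :
      List ℕ → List (Constr F) → ℕ → List Closure → List (IndexTerm F) →
      List (BType F) → List (IndexTerm F) → Prop where
    | nil : ∀ φ Φ a, CTypings E pr φ Φ a [] [] [] []
    | cons : ∀ φ Φ a c ρ I Is τ τs H Hs,
        CTyping E pr (a :: φ) (cLT E a I :: Φ) c τ H →
        CTypings E pr φ Φ a ρ Is τs Hs →
        CTypings E pr φ Φ a (c :: ρ) (I :: Is) (τ :: τs) (H :: Hs)

  /-- Lifting of dℓPCF typing to stacks (Figure 6). -/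
  inductive STyping {F : Type} (E : EqProgram F) (pr : Bool) :
      List ℕ → List (Constr F) → Stack → BType F → BType F → IndexTerm F → Prop where
    | nil : ∀ φ Φ σ τ J, cmpLe E pr Φ E.zero J → Sub E pr φ Φ σ τ →
        STyping E pr φ Φ [] σ τ J
    | cl : ∀ φ Φ a I γ μ τ c θ K H J,
        CTyping E pr (a :: φ) (cLT E a I :: Φ) c γ K →
        STyping E pr φ Φ θ μ τ H →
        cmpLe E pr Φ (E.add H (E.add (.bsum a I K) I)) J →
        STyping E pr φ Φ (.cl c :: θ) (.arr (.box a I γ) μ) τ J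
    | s : ∀ φ Φ θ I L K H τ J,
        STyping E pr φ Φ θ (.nat K H) τ J →
        Sub E pr φ Φ (.nat (E.add I E.one) (E.add L E.one)) (.nat K H) →
        STyping E pr φ Φ (.s :: θ) (.nat I L) τ J
    | p : ∀ φ Φ θ I L K H τ J,
        STyping E pr φ Φ θ (.nat K H) τ J →
        Sub E pr φ Φ (.nat (E.sub I E.one) (E.sub L E.one)) (.nat K H) →
        STyping E pr φ Φ (.p :: θ) (.nat I L) τ J
    | br : ∀ φ Φ t u ρ θ I L μ τ K H J,
        CTyping E pr φ (cLE0 E I :: Φ) (.mk t ρ) μ K →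
        CTyping E pr φ (cGE1 E L :: Φ) (.mk u ρ) μ K →
        STyping E pr φ Φ θ μ τ H →
        cmpLe E pr Φ (E.add K H) J →
        STyping E pr φ Φ (.br t u ρ :: θ) (.nat I L) τ J
end

/-- Lifting of dℓPCF typing to configurations. -/
def KTyping (E : EqProgram F) (pr : Bool) (φ : List ℕ) (Φ : List (Constr F))
    (C : Conf) (τ : BType F) (I : IndexTerm F) : Prop :=
  ∃ σ K J, CTyping E pr φ Φ (.mk C.1 C.2.1) σ K ∧ STyping E pr φ Φ C.2.2 σ τ J ∧
    cmpLe E pr Φ (E.add K J) I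

mutual
  /-- Lifting of PCF typing to closures (Figure 7). -/
  inductive PCTyping : Closure → PTy → Prop where
    | mk : ∀ t ρ τs σ, PTyping τs t σ → PCTypings ρ τs → PCTyping (.mk t ρ) σ

  /-- Pointwise PCF typing of the closures of an environment. -/
  inductive PCTypings : List Closure → List PTy → Prop where
    | nil : PCTypings [] []
    | cons : ∀ c ρ τ τs, PCTyping c τ → PCTypings ρ τs → PCTypings (c :: ρ) (τ :: τs)

  /-- Lifting of PCF typing to stacks. -/
  inductive PSTyping : Stack → PTy → PTy → Prop where
    | nil : ∀ σ, PSTyping [] σ σ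
    | cl : ∀ c γ μ τ θ, PCTyping c γ → PSTyping θ μ τ →
        PSTyping (.cl c :: θ) (.arr γ μ) τ
    | s : ∀ θ τ, PSTyping θ .nat τ → PSTyping (.s :: θ) .nat τ
    | p : ∀ θ τ, PSTyping θ .nat τ → PSTyping (.p :: θ) .nat τ
    | br : ∀ t u ρ θ μ τ, PCTyping (.mk t ρ) μ → PCTyping (.mk u ρ) μ →
        PSTyping θ μ τ → PSTyping (.br t u ρ :: θ) .nat τ
end

/-- Lifting of PCF typing to configurations. -/
def PKTyping (C : Conf) (τ : PTy) : Prop :=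
  ∃ σ, PCTyping (.mk C.1 C.2.1) σ ∧ PSTyping C.2.2 σ τ

/-- A universal equational program: every partial recursive function is the
semantics of some index term. -/
def Universal (E : EqProgram F) : Prop :=
  ∀ (k : ℕ) (f : List.Vector ℕ k →. ℕ), Nat.Partrec' f →
    ∃ I : IndexTerm F, I.fv ⊆ Finset.range k ∧
      ∀ (v : List.Vector ℕ k) (ρ : ℕ → ℕ),
        (∀ i : Fin k, ρ i = v.get i) →
        ∀ m, Sem E ρ I m ↔ m ∈ f v

theorem inClos_mk_iff {v t : Term} {ρ : Env} : InClos v (.mk t ρ) ↔ v = t ∨ InEnv v ρ := by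
  constructor
  · intro h
    cases h with
    | head => exact .inl rfl
    | env _ _ c hc hv => exact .inr ⟨c, hc, hv⟩
  · rintro (rfl | ⟨c, hc, hv⟩)
    · exact .head _ _
    · exact .env _ _ _ c hc hv

theorem inEnv_cons_iff {v : Term} {c : Closure} {ρ : Env} :
    InEnv v (c :: ρ) ↔ InClos v c ∨ InEnv v ρ := by
  simp [InEnv]

theorem inStack_cons_iff {v : Term} {e : StackEl} {ξ : Stack} :
    InStack v (e :: ξ) ↔ InStackEl v e ∨ InStack v ξ := by
  simp [InStack]

theorem inEnv_of_getElem?_eq_some {v t : Term} {ρ ρ' : Env} {n : ℕ}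
    (h : ρ[n]? = some (.mk t ρ')) (hv : v = t ∨ InEnv v ρ') : InEnv v ρ :=
  ⟨_, List.mem_of_getElem? h, inClos_mk_iff.2 hv⟩

def SizeBounded (N : ℕ) : Conf → Prop
  | (t, ρ, ξ) => t.size ≤ N ∧ (∀ v, InEnv v ρ → v.size ≤ N) ∧ ∀ v, InStack v ξ → v.size ≤ N

theorem SizeBounded.step {N : ℕ} {C D : Conf} (h : Step C D) (hC : SizeBounded N C) :
    SizeBounded N D := by
  obtain ⟨hhead, henv, hstack⟩ := hC
  cases h with
  | app t u ρ ξ =>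
    simp only [Term.size] at hhead
    refine ⟨by omega, henv, ?_⟩
    simp only [inStack_cons_iff, InStackEl, inClos_mk_iff]
    rintro v ((rfl | hv) | hv)
    exacts [by omega, henv v hv, hstack v hv]
  | lam t ρ c ξ =>
    simp only [inStack_cons_iff, InStackEl] at hstack
    refine ⟨by simp only [Term.size] at hhead; omega, ?_, fun v hv => hstack v (.inr hv)⟩
    simp only [inEnv_cons_iff]
    rintro v (hv | hv)
    exacts [hstack v (.inl hv), henv v hv]
  | var n ρ t' ρ' ξ hn =>
    exact ⟨henv t' (inEnv_of_getElem?_eq_some hn (.inl rfl)),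
      fun v hv => henv v (inEnv_of_getElem?_eq_some hn (.inr hv)), hstack⟩
  | ifz t u w ρ ξ =>
    simp only [Term.size] at hhead
    refine ⟨by omega, henv, ?_⟩
    simp only [inStack_cons_iff, InStackEl]
    rintro v ((rfl | rfl | hv) | hv)
    exacts [by omega, by omega, henv v hv, hstack v hv]
  | fix t ρ ξ =>
    refine ⟨by simp only [Term.size] at hhead; omega, ?_, hstack⟩
    simp only [inEnv_cons_iff, inClos_mk_iff]
    rintro v ((rfl | hv) | hv)
    exacts [hhead, henv v hv, henv v hv]
  | succLit n ρ ξ | predLit n ρ ξ =>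
    exact ⟨hhead, henv, fun v hv => hstack v (inStack_cons_iff.2 (.inr hv))⟩
  | brZero u w ρ μ ξ | brSucc n u w ρ μ ξ =>
    simp only [inStack_cons_iff, InStackEl] at hstack
    refine ⟨hstack _ (by simp), fun v hv => hstack v (.inl (.inr (.inr hv))),
      fun v hv => hstack v (.inr hv)⟩
  | succPush t ρ ξ | predPush t ρ ξ =>
    simp only [Term.size] at hhead
    refine ⟨by omega, henv, ?_⟩
    simp only [inStack_cons_iff, InStackEl, false_or]
    exact hstack

theorem SizeBounded.steps {N n : ℕ} {C D : Conf} (h : Steps n C D) (hC : SizeBounded N C) :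
    SizeBounded N D := by
  induction h with
  | refl => exact hC
  | step _ _ _ _ hstep _ ih => exact ih (hC.step hstep)

/-- Lemma 18 of the paper.  Let `t` be a PCF program and
`C = (t,ε,ε)`.  For every configuration `D = (u,ρ,ξ)` with `C →* D` and every
term `v` occurring in the environment `ρ` or in the stack `ξ`, `|v| ≤ |t|`. -/
theorem size_bound_terms_km
    (t : Term) (hp : PTyping [] t .nat)
    (n : ℕ) (u : Term) (ρ : Env) (ξ : Stack)
    (h : Steps n (t, [], []) (u, ρ, ξ))
    (v : Term) (hv : InEnv v ρ ∨ InStack v ξ) :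
    v.size ≤ t.size := by
  have hinit : SizeBounded t.size (t, [], []) :=
    ⟨le_rfl, by simp [InEnv], by simp [InStack]⟩
  obtain ⟨-, henv, hstack⟩ := hinit.steps h
  exact hv.elim (henv v) (hstack v)

end DlPCF
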